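/- Assume P(I(Θ) ∈ ℤ) = 1. Then P(I(Θ) = 0) > 0, for every nonnegative measurable function H on E one has ∫_E H dν = Σ_{j∈ℤ} ∫_0^∞ E[H(r B^j Θ) · 1{I(Θ) = 0}] α r^{−α−1} dr, and moreover Σ_{j∈ℤ} E[‖Θ_j‖^α · 1{I(Θ) = 0}] = 1. -/

import Mathlib

/-!
The infargmax `I` is equivariant under shifts, `I(B^k y) = I(y) + k`, and invariant under
positive scalings, so `{I ∉ ℤ}` is a shift-invariant cone. Its `Θ`-probability is zero, hence
by the polar decomposition it is `ν`-null inside `{y₀ ≠ 0}`, and by shift invariance and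
`ν{0} = 0` it is `ν`-null. Thus `ν` splits over the disjoint events `{I = j}`, and shift
invariance carries `{I = j}` to `{I = 0} ⊆ {y₀ ≠ 0}`, where the polar decomposition applies.
For `H = 1{‖y₀‖ > 1}`, integrating out `r` (the `α r^{-α-1} dr`-mass of `{r > 1/c}` is `c^α`)
gives `Σ_j E[‖Θ_j‖^α 1{I(Θ) = 0}] = ν{‖y₀‖ > 1} = 1`, which forces `P(I(Θ) = 0) > 0`.
-/

open MeasureTheory ProbabilityTheory Set Filter
open scoped ENNReal NNReal Topology

noncomputable section

/-- The iterated backshift operator: `(B^k x) j = x (j - k)`. -/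
def backshift {V : Type*} (k : ℤ) (x : ℤ → V) : ℤ → V := fun j => x (j - k)

/-- `InfargmaxAt x j` is the event `I(x) = j` for the infargmax functional `I`:
the first time the supremum of the norms is achieved is `j`, i.e.
`sup_{i<j} ‖x_i‖ < ‖x_j‖` and `sup_{i>j} ‖x_i‖ ≤ ‖x_j‖`.  (`I(x) ∈ ℤ` is then
expressed as `∃ j, InfargmaxAt x j`.) -/
def InfargmaxAt {V : Type*} [NormedAddCommGroup V] (x : ℤ → V) (j : ℤ) : Prop :=
  (⨆ i : {i : ℤ // i < j}, (‖x i.1‖₊ : ℝ≥0∞)) < (‖x j‖₊ : ℝ≥0∞) ∧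
    (⨆ i : {i : ℤ // j < i}, (‖x i.1‖₊ : ℝ≥0∞)) ≤ (‖x j‖₊ : ℝ≥0∞)

section Backshift

variable {V : Type*}

theorem backshift_apply (k : ℤ) (x : ℤ → V) (j : ℤ) : backshift k x j = x (j - k) := rfl

theorem backshift_add (k m : ℤ) :
    (backshift (k + m) : (ℤ → V) → ℤ → V) = backshift k ∘ backshift m := by
  funext x j
  simp [backshift, sub_sub]

theorem backshift_zero : (backshift 0 : (ℤ → V) → ℤ → V) = id := by
  funext x j
  simp [backshift]

theorem backshift_smul {M : Type*} [SMul M V] (k : ℤ) (c : M) (x : ℤ → V) :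
    backshift k (c • x) = c • backshift k x := rfl

theorem measurable_backshift [MeasurableSpace V] (k : ℤ) :
    Measurable (backshift k : (ℤ → V) → ℤ → V) :=
  measurable_pi_lambda _ fun j => measurable_pi_apply (j - k)

theorem map_backshift_eq_self [MeasurableSpace V] {μ : Measure (ℤ → V)}
    (h : μ.map (backshift 1) = μ) (k : ℤ) : μ.map (backshift k) = μ := by
  have hnat : ∀ n : ℕ, μ.map (backshift n) = μ := by
    intro n
    induction n with
    | zero => simp [backshift_zero]
    | succ n ih =>
      rw [Nat.cast_succ, add_comm, backshift_add,
        ← Measure.map_map (measurable_backshift _) (measurable_backshift _), ih, h]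
  obtain ⟨n, rfl | rfl⟩ := Int.eq_nat_or_neg k
  · exact hnat n
  · conv_lhs => rw [← hnat n]
    rw [Measure.map_map (measurable_backshift _) (measurable_backshift _), ← backshift_add,
      neg_add_cancel, backshift_zero, Measure.map_id]

end Backshift

section Infargmax

variable {V : Type*} [NormedAddCommGroup V]

theorem infargmaxAt_backshift (k : ℤ) (x : ℤ → V) (j : ℤ) :
    InfargmaxAt (backshift k x) j ↔ InfargmaxAt x (j - k) := by
  let before : {i : ℤ // i < j} ≃ {i : ℤ // i < j - k} :=
    (Equiv.subRight k).subtypeEquiv fun i => by simp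
  let after : {i : ℤ // j < i} ≃ {i : ℤ // j - k < i} :=
    (Equiv.subRight k).subtypeEquiv fun i => by simp
  unfold InfargmaxAt
  rw [← before.iSup_comp, ← after.iSup_comp]
  rfl

theorem exists_infargmaxAt_backshift_iff (k : ℤ) (x : ℤ → V) :
    (∃ j, InfargmaxAt (backshift k x) j) ↔ ∃ j, InfargmaxAt x j := by
  simp only [infargmaxAt_backshift]
  exact ⟨fun ⟨j, hj⟩ => ⟨j - k, hj⟩, fun ⟨j, hj⟩ => ⟨j + k, by simpa using hj⟩⟩

theorem infargmaxAt_smul {𝕜 : Type*} [NormedField 𝕜] [NormedSpace 𝕜 V] {c : 𝕜} (hc : c ≠ 0)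
    (x : ℤ → V) (j : ℤ) : InfargmaxAt (c • x) j ↔ InfargmaxAt x j := by
  have hc₀ : (‖c‖₊ : ℝ≥0∞) ≠ 0 := by simpa using hc
  unfold InfargmaxAt
  simp only [Pi.smul_apply, nnnorm_smul, ENNReal.coe_mul, ← ENNReal.mul_iSup]
  rw [ENNReal.mul_lt_mul_iff_right hc₀ ENNReal.coe_ne_top,
    ENNReal.mul_le_mul_iff_right hc₀ ENNReal.coe_ne_top]

theorem InfargmaxAt.unique {x : ℤ → V} {j j' : ℤ} (h : InfargmaxAt x j)
    (h' : InfargmaxAt x j') : j = j' := by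
  by_contra hne
  wlog hlt : j < j' generalizing j j'
  · exact this h' h (Ne.symm hne) (lt_of_le_of_ne (not_lt.1 hlt) (Ne.symm hne))
  have hle : (‖x j'‖₊ : ℝ≥0∞) ≤ ‖x j‖₊ :=
    (le_iSup (fun i : {i : ℤ // j < i} => (‖x i.1‖₊ : ℝ≥0∞)) ⟨j', hlt⟩).trans h.2
  have hlt' : (‖x j‖₊ : ℝ≥0∞) < ‖x j'‖₊ :=
    (le_iSup (fun i : {i : ℤ // i < j'} => (‖x i.1‖₊ : ℝ≥0∞)) ⟨j, hlt⟩).trans_lt h'.1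
  exact hle.not_gt hlt'

theorem InfargmaxAt.ne_zero {x : ℤ → V} {j : ℤ} (h : InfargmaxAt x j) : x j ≠ 0 := by
  intro h0
  simpa [h0] using h.1

theorem measurableSet_setOf_infargmaxAt [MeasurableSpace V] [BorelSpace V] (j : ℤ) :
    MeasurableSet {x : ℤ → V | InfargmaxAt x j} := by
  have hnorm : ∀ i, Measurable fun x : ℤ → V => (‖x i‖₊ : ℝ≥0∞) := fun i =>
    (measurable_pi_apply i).nnnorm.coe_nnreal_ennreal
  have hsup : ∀ s : Set ℤ, Measurable fun x : ℤ → V => ⨆ i : s, (‖x i.1‖₊ : ℝ≥0∞) :=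
    fun s => Measurable.iSup fun i => hnorm i
  exact (measurableSet_lt (hsup {i | i < j}) (hnorm j)).inter
    (measurableSet_le (hsup {i | j < i}) (hnorm j))

theorem measurableSet_setOf_exists_infargmaxAt [MeasurableSpace V] [BorelSpace V] :
    MeasurableSet {x : ℤ → V | ∃ j, InfargmaxAt x j} := by
  rw [Set.ofPred_exists]
  exact MeasurableSet.iUnion measurableSet_setOf_infargmaxAt

end Infargmax

section ShiftInvariant

variable {V : Type*} [MeasurableSpace V] {ν : Measure (ℤ → V)}

theorem measure_eq_zero_of_backshift_invariant [Zero V] (hshift : ∀ k, ν.map (backshift k) = ν)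
    (hν0 : ν {0} = 0) {S : Set (ℤ → V)} (hS : ∀ k, backshift k ⁻¹' S = S)
    (hS0 : ν (S ∩ {y | y 0 ≠ 0}) = 0) : ν S = 0 := by
  have hSk : ∀ k : ℤ, ν (S ∩ {y | y k ≠ 0}) = 0 := by
    intro k
    have hpre : backshift (-k) ⁻¹' (S ∩ {y | y 0 ≠ 0}) = S ∩ {y | y k ≠ 0} := by
      rw [Set.preimage_inter, hS]
      ext y
      simp [backshift_apply]
    refine le_antisymm ?_ zero_le
    calc ν (S ∩ {y | y k ≠ 0}) = ν (backshift (-k) ⁻¹' (S ∩ {y | y 0 ≠ 0})) := by rw [hpre]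
      _ ≤ ν.map (backshift (-k)) (S ∩ {y | y 0 ≠ 0}) :=
        Measure.le_map_apply (measurable_backshift _).aemeasurable _
      _ = 0 := by rw [hshift, hS0]
  have hcover : S ⊆ {0} ∪ ⋃ k : ℤ, S ∩ {y | y k ≠ 0} := by
    intro y hy
    by_cases h0 : y = 0
    · exact Or.inl h0
    · obtain ⟨k, hk⟩ := Function.ne_iff.1 h0
      exact Or.inr (Set.mem_iUnion.2 ⟨k, hy, hk⟩)
  exact measure_mono_null hcover (measure_union_null hν0 (measure_iUnion_null hSk))

variable [NormedAddCommGroup V] [BorelSpace V]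

theorem setLIntegral_infargmaxAt_eq (hshift : ∀ k, ν.map (backshift k) = ν)
    {H : (ℤ → V) → ℝ≥0∞} (hH : Measurable H) (j : ℤ) :
    ∫⁻ y in {y | InfargmaxAt y j}, H y ∂ν
      = ∫⁻ y in {y | InfargmaxAt y 0}, H (backshift j y) ∂ν := by
  have hpre : backshift j ⁻¹' {y : ℤ → V | InfargmaxAt y j} = {y | InfargmaxAt y 0} := by
    ext y
    simp [infargmaxAt_backshift]
  conv_lhs => rw [← hshift j]
  rw [setLIntegral_map (measurableSet_setOf_infargmaxAt j) hH (measurable_backshift j), hpre]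

theorem lintegral_eq_tsum_setLIntegral_infargmaxAt
    (hν : ν {y | ¬∃ j, InfargmaxAt y j} = 0) (H : (ℤ → V) → ℝ≥0∞) :
    ∫⁻ y, H y ∂ν = ∑' j : ℤ, ∫⁻ y in {y | InfargmaxAt y j}, H y ∂ν := by
  have hae : ∀ᵐ y ∂ν, y ∈ ⋃ j : ℤ, {y : ℤ → V | InfargmaxAt y j} := by
    simpa [ae_iff] using hν
  have hdisj : Pairwise (Function.onFun Disjoint fun j : ℤ => {y : ℤ → V | InfargmaxAt y j}) :=
    fun i j hij => Set.disjoint_left.2 fun y hi hj => hij (hi.unique hj)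
  rw [← lintegral_iUnion measurableSet_setOf_infargmaxAt hdisj,
    Measure.restrict_eq_self_of_ae_mem hae]

end ShiftInvariant

theorem lintegral_Ioi_rpow_density {α a : ℝ} (hα : 0 < α) (ha : 0 < a) :
    ∫⁻ r in Ioi a, ENNReal.ofReal (α * r ^ (-α - 1)) = ENNReal.ofReal (a ^ (-α)) := by
  have hint : IntegrableOn (fun r : ℝ => α * r ^ (-α - 1)) (Ioi a) :=
    (integrableOn_Ioi_rpow_of_lt (by linarith) ha).const_mul α
  have hnn : 0 ≤ᵐ[volume.restrict (Ioi a)] fun r : ℝ => α * r ^ (-α - 1) := by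
    filter_upwards [ae_restrict_mem measurableSet_Ioi] with r hr
    exact mul_nonneg hα.le (Real.rpow_nonneg (ha.trans hr).le _)
  rw [← ofReal_integral_eq_lintegral_ofReal hint hnn, integral_const_mul,
    integral_Ioi_rpow_of_lt (by linarith) ha, show -α - 1 + 1 = -α by ring]
  congr 1
  field_simp

theorem setLIntegral_indicator_one_lt_norm_smul {V : Type*} [NormedAddCommGroup V]
    [NormedSpace ℝ V] {α : ℝ} (hα : 0 < α) (v : V) :
    ∫⁻ r in Ioi (0 : ℝ), {w : V | 1 < ‖w‖}.indicator 1 (r • v) * ENNReal.ofReal (α * r ^ (-α - 1))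
      = ENNReal.ofReal (‖v‖ ^ α) := by
  rcases (norm_nonneg v).eq_or_lt with hv | hv
  · have hv' : v = 0 := norm_eq_zero.1 hv.symm
    simp [hv', Real.zero_rpow hα.ne']
  have hind : ∀ r ∈ Ioi (0 : ℝ),
      {w : V | 1 < ‖w‖}.indicator 1 (r • v) * ENNReal.ofReal (α * r ^ (-α - 1))
        = (Ioi ‖v‖⁻¹).indicator (fun r => ENNReal.ofReal (α * r ^ (-α - 1))) r := by
    intro r hr
    simp only [Set.indicator_apply, Set.mem_ofPred_eq, Set.mem_Ioi, norm_smul,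
      Real.norm_of_nonneg (le_of_lt hr), inv_lt_iff_one_lt_mul₀ hv, Pi.one_apply]
    split_ifs <;> simp
  rw [setLIntegral_congr_fun measurableSet_Ioi hind, lintegral_indicator measurableSet_Ioi,
    Measure.restrict_restrict measurableSet_Ioi,
    Set.inter_eq_self_of_subset_left (Set.Ioi_subset_Ioi (inv_pos.2 hv).le),
    lintegral_Ioi_rpow_density hα (inv_pos.2 hv), Real.inv_rpow hv.le, Real.rpow_neg hv.le, inv_inv]

section Polar

variable {V : Type*} [NormedAddCommGroup V] [NormedSpace ℝ V] [MeasurableSpace V]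
  {Ω : Type*} [MeasurableSpace Ω] {P : Measure Ω} {Θ : Ω → ℤ → V} {α : ℝ}
  {ν : Measure (ℤ → V)}

def HasPolarDecomposition (ν : Measure (ℤ → V)) (P : Measure Ω) (Θ : Ω → ℤ → V) (α : ℝ) :
    Prop :=
  ∀ H : (ℤ → V) → ℝ≥0∞, Measurable H →
    ∫⁻ y in {y : ℤ → V | y 0 ≠ 0}, H y ∂ν
      = ∫⁻ r in Ioi (0 : ℝ), (∫⁻ ω, H (r • Θ ω) ∂P) * ENNReal.ofReal (α * r ^ (-α - 1))

theorem HasPolarDecomposition.measure_inter_eq_zero (hpolar : HasPolarDecomposition ν P Θ α)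
    {S : Set (ℤ → V)} (hS : MeasurableSet S) (hcone : ∀ r : ℝ, 0 < r → ∀ y, r • y ∈ S → y ∈ S)
    (hΘS : P (Θ ⁻¹' S) = 0) : ν (S ∩ {y | y 0 ≠ 0}) = 0 := by
  have hinner : ∀ r ∈ Ioi (0 : ℝ),
      (∫⁻ ω, S.indicator 1 (r • Θ ω) ∂P) * ENNReal.ofReal (α * r ^ (-α - 1)) = 0 := by
    intro r hr
    have hae : ∀ᵐ ω ∂P, S.indicator 1 (r • Θ ω) = (0 : ℝ≥0∞) := by
      filter_upwards [measure_eq_zero_iff_ae_notMem.1 hΘS] with ω hω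
      exact Set.indicator_of_notMem (fun h => hω (hcone r hr _ h)) _
    rw [lintegral_congr_ae hae, lintegral_zero, zero_mul]
  rw [← Measure.restrict_apply hS, ← lintegral_indicator_one hS,
    hpolar _ (measurable_one.indicator hS), setLIntegral_congr_fun measurableSet_Ioi hinner,
    lintegral_zero]

theorem HasPolarDecomposition.setLIntegral_infargmaxAt [BorelSpace V]
    (hpolar : HasPolarDecomposition ν P Θ α)
    (hshift : ∀ k, ν.map (backshift k) = ν) (hΘ : Measurable Θ) {H : (ℤ → V) → ℝ≥0∞}
    (hH : Measurable H) (j : ℤ) :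
    ∫⁻ y in {y | InfargmaxAt y j}, H y ∂ν
      = ∫⁻ r in Ioi (0 : ℝ),
          (∫⁻ ω in {ω | InfargmaxAt (Θ ω) 0}, H (r • backshift j (Θ ω)) ∂P) *
            ENNReal.ofReal (α * r ^ (-α - 1)) := by
  set A₀ := {y : ℤ → V | InfargmaxAt y 0}
  have hA₀ : MeasurableSet A₀ := measurableSet_setOf_infargmaxAt 0
  have hHj : Measurable (A₀.indicator (H ∘ backshift j)) :=
    (hH.comp (measurable_backshift j)).indicator hA₀
  have hrestrict : ∫⁻ y in A₀, H (backshift j y) ∂ν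
      = ∫⁻ y in {y | y 0 ≠ 0}, A₀.indicator (H ∘ backshift j) y ∂ν := by
    rw [lintegral_indicator hA₀, Measure.restrict_restrict hA₀,
      Set.inter_eq_self_of_subset_left (show A₀ ⊆ {y | y 0 ≠ 0} from fun y hy => hy.ne_zero)]
    rfl
  rw [setLIntegral_infargmaxAt_eq hshift hH, hrestrict, hpolar _ hHj]
  refine setLIntegral_congr_fun measurableSet_Ioi fun r hr => ?_
  rw [show {ω | InfargmaxAt (Θ ω) 0} = Θ ⁻¹' A₀ from rfl, ← lintegral_indicator (hΘ hA₀)]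
  congr 2 with ω
  have hmem : r • Θ ω ∈ A₀ ↔ ω ∈ Θ ⁻¹' A₀ := infargmaxAt_smul (Set.mem_Ioi.1 hr).ne' (Θ ω) 0
  by_cases h : ω ∈ Θ ⁻¹' A₀
  · rw [Set.indicator_of_mem (hmem.2 h), Set.indicator_of_mem h]
    exact congrArg H (backshift_smul j r (Θ ω))
  · rw [Set.indicator_of_notMem (mt hmem.1 h), Set.indicator_of_notMem h]

theorem HasPolarDecomposition.measure_setOf_not_exists_infargmaxAt [BorelSpace V]
    (hpolar : HasPolarDecomposition ν P Θ α) (hshift : ∀ k, ν.map (backshift k) = ν)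
    (hν0 : ν {0} = 0) (hΘ : ∀ᵐ ω ∂P, ∃ j, InfargmaxAt (Θ ω) j) :
    ν {y | ¬∃ j, InfargmaxAt y j} = 0 := by
  refine measure_eq_zero_of_backshift_invariant hshift hν0
    (fun k => Set.ext fun y => not_congr (exists_infargmaxAt_backshift_iff k y)) ?_
  refine hpolar.measure_inter_eq_zero measurableSet_setOf_exists_infargmaxAt.compl
    (fun r hr y => ?_) (ae_iff.1 hΘ)
  simp [infargmaxAt_smul hr.ne']

end Polar

theorem lintegral_Ioi_lintegral_indicator_backshift {V : Type*} [NormedAddCommGroup V]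
    [NormedSpace ℝ V] [MeasurableSpace V] [BorelSpace V] {Ω : Type*} [MeasurableSpace Ω]
    {Q : Measure Ω} [SFinite Q] {Θ : Ω → ℤ → V} (hΘ : Measurable Θ) {α : ℝ} (hα : 0 < α)
    (j : ℤ) :
    ∫⁻ r in Ioi (0 : ℝ),
        (∫⁻ ω, {y : ℤ → V | 1 < ‖y 0‖}.indicator 1 (r • backshift j (Θ ω)) ∂Q) *
          ENNReal.ofReal (α * r ^ (-α - 1))
      = ∫⁻ ω, ENNReal.ofReal (‖Θ ω (-j)‖ ^ α) ∂Q := by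
  have hnorm : Measurable fun p : ℝ × Ω => ‖(p.1 • backshift j (Θ p.2)) 0‖ := by
    simp only [Pi.smul_apply, norm_smul]
    exact measurable_fst.norm.mul ((measurable_pi_apply _).comp (hΘ.comp measurable_snd)).norm
  have hF : Measurable (Function.uncurry fun (r : ℝ) (ω : Ω) =>
      {y : ℤ → V | 1 < ‖y 0‖}.indicator 1 (r • backshift j (Θ ω)) *
        ENNReal.ofReal (α * r ^ (-α - 1))) :=
    (measurable_one.indicator (measurableSet_lt measurable_const hnorm)).mul
      (ENNReal.measurable_ofReal.comp (measurable_const.mul (measurable_fst.pow_const _)))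
  calc _ = ∫⁻ r in Ioi (0 : ℝ), ∫⁻ ω,
        {y : ℤ → V | 1 < ‖y 0‖}.indicator 1 (r • backshift j (Θ ω)) *
          ENNReal.ofReal (α * r ^ (-α - 1)) ∂Q :=
        lintegral_congr fun r => (lintegral_mul_const' _ _ ENNReal.ofReal_ne_top).symm
    _ = ∫⁻ ω, (∫⁻ r in Ioi (0 : ℝ),
        {y : ℤ → V | 1 < ‖y 0‖}.indicator 1 (r • backshift j (Θ ω)) *
          ENNReal.ofReal (α * r ^ (-α - 1))) ∂Q := lintegral_lintegral_swap hF.aemeasurable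
    _ = _ := lintegral_congr fun ω => by
        rw [← setLIntegral_indicator_one_lt_norm_smul hα (Θ ω (-j))]
        simp [Set.indicator_apply, backshift_apply]

theorem statement3_general
    -- `V` plays the role of `ℝ^d` (`d ≥ 1`) equipped with an arbitrary norm
    {V : Type*} [NormedAddCommGroup V] [NormedSpace ℝ V]
    [MeasurableSpace V] [BorelSpace V]
    (α : ℝ) (hα : 0 < α)
    -- the tail measure and its properties
    (ν : Measure (ℤ → V))
    (hν0 : ν {0} = 0)
    (hν1 : ν {y : ℤ → V | 1 < ‖y 0‖} = 1)
    (hνshift : ν.map (backshift 1) = ν)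
    -- the tail process `Y` and the spectral tail process `Θ`
    {Ω : Type*} [MeasurableSpace Ω] (P : Measure Ω) [IsProbabilityMeasure P]
    (Y : Ω → ℤ → V) (hYmeas : Measurable Y)
    (Θ : Ω → ℤ → V) (hΘdef : ∀ ω, Θ ω = ‖Y ω 0‖⁻¹ • Y ω)
    (hpolar : ∀ H : (ℤ → V) → ℝ≥0∞, Measurable H →
      ∫⁻ y in {y : ℤ → V | y 0 ≠ 0}, H y ∂ν
        = ∫⁻ r in Ioi (0 : ℝ),
            (∫⁻ ω, H (r • Θ ω) ∂P) * ENNReal.ofReal (α * r ^ (-α - 1)))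
    -- the statement
    (hI : P {ω | ∃ j : ℤ, InfargmaxAt (Θ ω) j} = 1) :
    0 < P {ω | InfargmaxAt (Θ ω) 0} ∧
      (∀ H : (ℤ → V) → ℝ≥0∞, Measurable H →
        ∫⁻ y, H y ∂ν
          = ∑' j : ℤ, ∫⁻ r in Ioi (0 : ℝ),
              (∫⁻ ω in {ω | InfargmaxAt (Θ ω) 0}, H (r • backshift j (Θ ω)) ∂P) *
                ENNReal.ofReal (α * r ^ (-α - 1))) ∧
      (∑' j : ℤ, ∫⁻ ω in {ω | InfargmaxAt (Θ ω) 0}, ENNReal.ofReal (‖Θ ω j‖ ^ α) ∂P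
        = 1) := by
  have hpolar : HasPolarDecomposition ν P Θ α := hpolar
  have hΘ : Measurable Θ := by
    rw [funext hΘdef]
    exact measurable_pi_lambda _ fun i =>
      ((measurable_pi_apply 0).comp hYmeas).norm.inv.smul ((measurable_pi_apply i).comp hYmeas)
  have hshift := map_backshift_eq_self hνshift
  have hνE := hpolar.measure_setOf_not_exists_infargmaxAt hshift hν0
    (ae_iff.2 ((prob_compl_eq_zero_iff (hΘ measurableSet_setOf_exists_infargmaxAt)).2 hI))
  have hdecomp : ∀ H : (ℤ → V) → ℝ≥0∞, Measurable H →
      ∫⁻ y, H y ∂ν = ∑' j : ℤ, ∫⁻ r in Ioi (0 : ℝ),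
        (∫⁻ ω in {ω | InfargmaxAt (Θ ω) 0}, H (r • backshift j (Θ ω)) ∂P) *
          ENNReal.ofReal (α * r ^ (-α - 1)) := fun H hH => by
    rw [lintegral_eq_tsum_setLIntegral_infargmaxAt hνE]
    exact tsum_congr fun j => hpolar.setLIntegral_infargmaxAt hshift hΘ hH j
  have hmass : ∑' j : ℤ, ∫⁻ ω in {ω | InfargmaxAt (Θ ω) 0},
      ENNReal.ofReal (‖Θ ω j‖ ^ α) ∂P = 1 := by
    have hS : MeasurableSet {y : ℤ → V | 1 < ‖y 0‖} :=
      measurableSet_lt measurable_const (measurable_pi_apply 0).norm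
    calc _ = ∑' j : ℤ, ∫⁻ ω in {ω | InfargmaxAt (Θ ω) 0},
          ENNReal.ofReal (‖Θ ω (-j)‖ ^ α) ∂P := ((Equiv.neg ℤ).tsum_eq _).symm
      _ = ∫⁻ y, {y : ℤ → V | 1 < ‖y 0‖}.indicator 1 y ∂ν := by
        rw [hdecomp _ (measurable_one.indicator hS)]
        exact tsum_congr fun j => (lintegral_Ioi_lintegral_indicator_backshift hΘ hα j).symm
      _ = 1 := by rw [lintegral_indicator_one hS, hν1]
  refine ⟨pos_iff_ne_zero.2 fun h0 => ?_, hdecomp, hmass⟩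
  simp [Measure.restrict_eq_zero.2 h0] at hmass

/-- **Recovering the tail measure from the spectral tail process conditioned to
achieve its first maximum at time zero.**  If `P(I(Θ) ∈ ℤ) = 1` then `P(I(Θ) = 0) > 0`,
`ν(H) = Σ_{j∈ℤ} ∫_0^∞ E[H(r B^j Θ) 1{I(Θ)=0}] α r^{−α−1} dr` for every nonnegative
measurable `H`, and `Σ_{j∈ℤ} E[‖Θ_j‖^α 1{I(Θ)=0}] = 1`. -/
theorem statement3
    -- `V` plays the role of `ℝ^d` (`d ≥ 1`) equipped with an arbitrary norm
    {V : Type*} [NormedAddCommGroup V] [NormedSpace ℝ V] [FiniteDimensional ℝ V]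
    [Nontrivial V] [MeasurableSpace V] [BorelSpace V]
    (α : ℝ) (hα : 0 < α)
    -- the tail measure and its properties
    (ν : Measure (ℤ → V))
    (hν0 : ν {0} = 0)
    (hν1 : ν {y : ℤ → V | 1 < ‖y 0‖} = 1)
    (hνshift : ν.map (backshift 1) = ν)
    (hνhom : ∀ A : Set (ℤ → V), MeasurableSet A → ∀ c : ℝ, 0 < c →
      ν ((fun x => c • x) '' A) = ENNReal.ofReal (c ^ (-α)) * ν A)
    -- the tail process `Y` and the spectral tail process `Θ`
    {Ω : Type*} [MeasurableSpace Ω] (P : Measure Ω) [IsProbabilityMeasure P]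
    (Y : Ω → ℤ → V) (hYmeas : Measurable Y)
    (hYlaw : P.map Y = ν.restrict {y : ℤ → V | 1 < ‖y 0‖})
    (Θ : Ω → ℤ → V) (hΘdef : ∀ ω, Θ ω = ‖Y ω 0‖⁻¹ • Y ω)
    (hPareto : ∀ u : ℝ, 1 ≤ u → P {ω | u < ‖Y ω 0‖} = ENNReal.ofReal (u ^ (-α)))
    (hindep : IndepFun (fun ω => ‖Y ω 0‖) Θ P)
    (hpolar : ∀ H : (ℤ → V) → ℝ≥0∞, Measurable H →
      ∫⁻ y in {y : ℤ → V | y 0 ≠ 0}, H y ∂ν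
        = ∫⁻ r in Ioi (0 : ℝ),
            (∫⁻ ω, H (r • Θ ω) ∂P) * ENNReal.ofReal (α * r ^ (-α - 1)))
    -- the statement
    (hI : P {ω | ∃ j : ℤ, InfargmaxAt (Θ ω) j} = 1) :
    0 < P {ω | InfargmaxAt (Θ ω) 0} ∧
      (∀ H : (ℤ → V) → ℝ≥0∞, Measurable H →
        ∫⁻ y, H y ∂ν
          = ∑' j : ℤ, ∫⁻ r in Ioi (0 : ℝ),
              (∫⁻ ω in {ω | InfargmaxAt (Θ ω) 0}, H (r • backshift j (Θ ω)) ∂P) *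
                ENNReal.ofReal (α * r ^ (-α - 1))) ∧
      (∑' j : ℤ, ∫⁻ ω in {ω | InfargmaxAt (Θ ω) 0}, ENNReal.ofReal (‖Θ ω j‖ ^ α) ∂P
        = 1) :=
  statement3_general α hα ν hν0 hν1 hνshift P Y hYmeas Θ hΘdef hpolar hI
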